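/- arXiv:1204.3365 — 5 statements merged into one kernel-verified Lean document; each statement's English description precedes it below -/
import Mathlib

section
/- Let M be a matroid with ground set E and rank function r that is representable over some field. Then for every integer n ≥ 4 and every collection X_1, …, X_n of subsets of E, the following inequality holds: r(X_1 ∪ X_2) + r(X_1 ∪ X_3 ∪ X_n) + r(X_3) + Σ_{i=4}^{n} ( r(X_i) + r(X_2 ∪ X_{i−1} ∪ X_i) ) ≤ r(X_1 ∪ X_3) + r(X_1 ∪ X_n) + r(X_2 ∪ X_3) + Σ_{i=4}^{n} ( r(X_2 ∪ X_i) + r(X_{i−1} ∪ X_i) ). -/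
universe u

/-- A matroid presented as a finite ground set together with a rank function
satisfying the rank axioms (R1), (R2), (R3). -/
structure RankMatroid (α : Type) [DecidableEq α] where
  E : Finset α
  r : Finset α → ℕ
  r_le_card : ∀ X ⊆ E, r X ≤ X.card
  r_mono : ∀ X Y : Finset α, X ⊆ Y → Y ⊆ E → r X ≤ r Y
  r_submod : ∀ X Y : Finset α, X ⊆ E → Y ⊆ E →
    r (X ∪ Y) + r (X ∩ Y) ≤ r X + r Y

namespace RankMatroid

variable {α : Type} [DecidableEq α]

/-- A set is independent if its rank equals its cardinality. -/
def Indep (M : RankMatroid α) (X : Finset α) : Prop :=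
  X ⊆ M.E ∧ M.r X = X.card

/-- A base is a maximal independent set. -/
def Base (M : RankMatroid α) (B : Finset α) : Prop :=
  M.Indep B ∧ M.r B = M.r M.E

/-- A dependent set. -/
def Dep (M : RankMatroid α) (X : Finset α) : Prop :=
  X ⊆ M.E ∧ M.r X ≠ X.card

/-- A circuit is a minimal dependent set. -/
def Circuit (M : RankMatroid α) (C : Finset α) : Prop :=
  M.Dep C ∧ ∀ X ⊂ C, M.Indep X

/-- A spanning set. -/
def Spanning (M : RankMatroid α) (X : Finset α) : Prop :=
  X ⊆ M.E ∧ M.r X = M.r M.E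

/-- A flat. -/
def Flat (M : RankMatroid α) (X : Finset α) : Prop :=
  X ⊆ M.E ∧ ∀ e ∈ M.E, e ∉ X → M.r X < M.r (insert e X)

/-- A hyperplane is a flat of rank `r(E) - 1`. -/
def Hyperplane (M : RankMatroid α) (X : Finset α) : Prop :=
  M.Flat X ∧ M.r X + 1 = M.r M.E

/-- `M` is representable over the field `F`: there is a map from the ground type to
an `F`-vector space under which the rank of every subset of the ground set equals the
dimension of the span of its image. -/
def RepOver (M : RankMatroid α) (F : Type u) [Field F] : Prop :=
  ∃ (V : Type u) (_ : AddCommGroup V) (_ : Module F V) (φ : α → V),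
    ∀ X ⊆ M.E, M.r X = Module.finrank F (Submodule.span F (φ '' (X : Set α)))

/-- `M` is representable if it is representable over at least one field. -/
def Representable (M : RankMatroid α) : Prop :=
  ∃ (F : Type) (_ : Field F), M.RepOver F

end RankMatroid

section KinserAux

universe v w

open Module

variable {F : Type v} [Field F] {V : Type w} [AddCommGroup V] [Module F V]

private lemma kinser_submod_eq (U W : Submodule F V) [FiniteDimensional F U]
    [FiniteDimensional F W] :
    finrank F ↥(U ⊔ W) + finrank F ↥(U ⊓ W) = finrank F U + finrank F W :=
  Submodule.finrank_sup_add_finrank_inf_eq U W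

private lemma kinser_sup_le_aux (U W T : Submodule F V) [FiniteDimensional F T]
    (h : U ⊔ W ≤ T) [FiniteDimensional F U] [FiniteDimensional F W] :
    finrank F ↥(U ⊔ W) ≤ finrank F T :=
  Submodule.finrank_mono h

/-- `d(P⊓Q) + d(Q⊓R) ≤ d Q + d(P⊓R)` for subspaces. -/
private lemma kinser_triple (P Q R : Submodule F V) [FiniteDimensional F P]
    [FiniteDimensional F Q] [FiniteDimensional F R] :
    finrank F ↥(P ⊓ Q) + finrank F ↥(Q ⊓ R) ≤ finrank F Q + finrank F ↥(P ⊓ R) := by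
  have h := kinser_submod_eq (P ⊓ Q) (Q ⊓ R)
  have h1 : finrank F ↥((P ⊓ Q) ⊔ (Q ⊓ R)) ≤ finrank F Q :=
    Submodule.finrank_mono (sup_le inf_le_right inf_le_left)
  have h2 : finrank F ↥((P ⊓ Q) ⊓ (Q ⊓ R)) ≤ finrank F ↥(P ⊓ R) :=
    Submodule.finrank_mono
      (le_inf (le_trans inf_le_left inf_le_left) (le_trans inf_le_right inf_le_right))
  omega

/-- Telescoping claim for the chain of intersections. -/
private lemma kinser_telescope (A : ℕ → Submodule F V)
    (hfd : ∀ i, FiniteDimensional F (A i)) (n : ℕ) (hn : 4 ≤ n) :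
    finrank F (A 3) + ∑ i ∈ Finset.Icc 4 n, finrank F ↥(A (i - 1) ⊓ A i)
      ≤ finrank F ↥(A 3 ⊓ A n) + ∑ i ∈ Finset.Icc 4 n, finrank F (A (i - 1)) := by
  haveI := hfd 3
  induction n, hn using Nat.le_induction with
  | base =>
    haveI := hfd 4
    rw [Finset.Icc_self, Finset.sum_singleton, Finset.sum_singleton]
    have e1 : finrank F ↥(A (4 - 1) ⊓ A 4) = finrank F ↥(A 3 ⊓ A 4) := rfl
    have e2 : finrank F (A (4 - 1)) = finrank F (A 3) := rfl
    omega
  | succ n hn ih =>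
    haveI := hfd n; haveI := hfd (n + 1)
    rw [Finset.sum_Icc_succ_top (by omega : 4 ≤ n + 1),
      Finset.sum_Icc_succ_top (by omega : 4 ≤ n + 1)]
    have hL := kinser_triple (A 3) (A n) (A (n + 1))
    have e1 : finrank F ↥(A (n + 1 - 1) ⊓ A (n + 1)) = finrank F ↥(A n ⊓ A (n + 1)) := rfl
    have e2 : finrank F (A (n + 1 - 1)) = finrank F (A n) := rfl
    omega

/-- Kinser's inequality for arrangements of finite-dimensional subspaces. -/
private lemma kinser_subspace (S : ℕ → Submodule F V)
    (hfd : ∀ i, FiniteDimensional F (S i)) (n : ℕ) (hn : 4 ≤ n) :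
    finrank F ↥(S 1 ⊔ S 2) + finrank F ↥(S 1 ⊔ S 3 ⊔ S n) + finrank F (S 3)
        + ∑ i ∈ Finset.Icc 4 n, (finrank F (S i) + finrank F ↥(S 2 ⊔ S (i - 1) ⊔ S i))
      ≤ finrank F ↥(S 1 ⊔ S 3) + finrank F ↥(S 1 ⊔ S n) + finrank F ↥(S 2 ⊔ S 3)
        + ∑ i ∈ Finset.Icc 4 n,
            (finrank F ↥(S 2 ⊔ S i) + finrank F ↥(S (i - 1) ⊔ S i)) := by
  haveI := hfd 1; haveI := hfd 2; haveI := hfd 3; haveI := hfd n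
  set Z : Submodule F V := (S 1 ⊔ S 3) ⊓ (S 1 ⊔ S n) with hZ
  haveI : FiniteDimensional F Z := by
    rw [hZ]; infer_instance
  -- F1
  have e1 : (S 1 ⊔ S 3) ⊔ (S 1 ⊔ S n) = S 1 ⊔ S 3 ⊔ S n := by
    rw [sup_sup_sup_comm, sup_idem, sup_assoc]
  have F1 : finrank F ↥(S 1 ⊔ S 3 ⊔ S n) + finrank F Z
      = finrank F ↥(S 1 ⊔ S 3) + finrank F ↥(S 1 ⊔ S n) := by
    have h := kinser_submod_eq (S 1 ⊔ S 3) (S 1 ⊔ S n)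
    rw [e1] at h
    exact h
  -- F2
  have F2 : finrank F ↥(S 1 ⊔ S 2) ≤ finrank F ↥(Z ⊔ S 2) := by
    refine Submodule.finrank_mono (sup_le_sup_right ?_ (S 2))
    rw [hZ]
    exact le_inf le_sup_left le_sup_left
  -- F3, F4
  have F3 : finrank F ↥(Z ⊔ S 2) + finrank F ↥(Z ⊓ S 2)
      = finrank F Z + finrank F (S 2) := kinser_submod_eq Z (S 2)
  have F4 : finrank F ↥(S 2 ⊔ S 3) + finrank F ↥(S 2 ⊓ S 3)
      = finrank F (S 2) + finrank F (S 3) := kinser_submod_eq (S 2) (S 3)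
  -- summed (5)
  have h5 : (∑ i ∈ Finset.Icc 4 n, finrank F ↥(S 2 ⊔ S i))
        + (∑ i ∈ Finset.Icc 4 n, finrank F ↥(S 2 ⊓ S i))
      = (∑ i ∈ Finset.Icc 4 n, finrank F (S 2))
        + ∑ i ∈ Finset.Icc 4 n, finrank F (S i) := by
    rw [← Finset.sum_add_distrib, ← Finset.sum_add_distrib]
    exact Finset.sum_congr rfl fun i _ => by
      haveI := hfd i; exact kinser_submod_eq (S 2) (S i)
  -- summed (6)
  have h6 : (∑ i ∈ Finset.Icc 4 n, finrank F ↥(S 2 ⊔ S (i - 1) ⊔ S i))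
        + (∑ i ∈ Finset.Icc 4 n, finrank F ↥(S 2 ⊓ (S (i - 1) ⊔ S i)))
      = (∑ i ∈ Finset.Icc 4 n, finrank F (S 2))
        + ∑ i ∈ Finset.Icc 4 n, finrank F ↥(S (i - 1) ⊔ S i) := by
    rw [← Finset.sum_add_distrib, ← Finset.sum_add_distrib]
    refine Finset.sum_congr rfl fun i _ => ?_
    haveI := hfd i; haveI := hfd (i - 1)
    rw [sup_assoc]
    exact kinser_submod_eq (S 2) (S (i - 1) ⊔ S i)
  -- summed (7)
  have h7 : (∑ i ∈ Finset.Icc 4 n, finrank F ↥(S 2 ⊓ S (i - 1)))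
        + (∑ i ∈ Finset.Icc 4 n, finrank F ↥(S 2 ⊓ S i))
      ≤ (∑ i ∈ Finset.Icc 4 n, finrank F ↥(S 2 ⊓ (S (i - 1) ⊔ S i)))
        + ∑ i ∈ Finset.Icc 4 n, finrank F ↥((S 2 ⊓ S (i - 1)) ⊓ (S 2 ⊓ S i)) := by
    rw [← Finset.sum_add_distrib, ← Finset.sum_add_distrib]
    refine Finset.sum_le_sum fun i _ => ?_
    haveI := hfd i; haveI := hfd (i - 1)
    have heq := kinser_submod_eq (S 2 ⊓ S (i - 1)) (S 2 ⊓ S i)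
    have hle : finrank F ↥((S 2 ⊓ S (i - 1)) ⊔ (S 2 ⊓ S i))
        ≤ finrank F ↥(S 2 ⊓ (S (i - 1) ⊔ S i)) :=
      Submodule.finrank_mono
        (sup_le (le_inf inf_le_left (le_trans inf_le_right le_sup_left))
          (le_inf inf_le_left (le_trans inf_le_right le_sup_right)))
    omega
  -- telescoping claim
  have hT : finrank F ↥(S 2 ⊓ S 3)
        + ∑ i ∈ Finset.Icc 4 n, finrank F ↥((S 2 ⊓ S (i - 1)) ⊓ (S 2 ⊓ S i))
      ≤ finrank F ↥((S 2 ⊓ S 3) ⊓ (S 2 ⊓ S n))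
        + ∑ i ∈ Finset.Icc 4 n, finrank F ↥(S 2 ⊓ S (i - 1)) :=
    kinser_telescope (fun i => S 2 ⊓ S i)
      (fun i => by haveI := hfd i; infer_instance) n hn
  -- F10
  have F10 : finrank F ↥((S 2 ⊓ S 3) ⊓ (S 2 ⊓ S n)) ≤ finrank F ↥(Z ⊓ S 2) := by
    refine Submodule.finrank_mono (le_inf ?_ (le_trans inf_le_left inf_le_left))
    rw [hZ]
    exact le_inf (le_trans inf_le_left (le_trans inf_le_right le_sup_right))
      (le_trans inf_le_right (le_trans inf_le_right le_sup_right))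
  rw [Finset.sum_add_distrib, Finset.sum_add_distrib]
  omega

end KinserAux

/-- Kinser's inequalities: if a matroid `M` is representable over some field, then for
every `n ≥ 4` and every collection `X_1, …, X_n` of subsets of the ground set,
Kinser's `n`-th inequality holds for the rank function of `M`. -/
theorem kinser_inequality {α : Type} [DecidableEq α] (M : RankMatroid α)
    (hM : M.Representable) (n : ℕ) (hn : 4 ≤ n) (X : ℕ → Finset α)
    (hX : ∀ i, 1 ≤ i → i ≤ n → X i ⊆ M.E) :
    M.r (X 1 ∪ X 2) + M.r (X 1 ∪ X 3 ∪ X n) + M.r (X 3)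
        + ∑ i ∈ Finset.Icc 4 n, (M.r (X i) + M.r (X 2 ∪ X (i - 1) ∪ X i))
      ≤ M.r (X 1 ∪ X 3) + M.r (X 1 ∪ X n) + M.r (X 2 ∪ X 3)
        + ∑ i ∈ Finset.Icc 4 n, (M.r (X 2 ∪ X i) + M.r (X (i - 1) ∪ X i)) := by
  obtain ⟨F, instF, V, instG, instM, φ, hφ⟩ := hM
  letI := instF; letI := instG; letI := instM
  set S : ℕ → Submodule F V := fun i => Submodule.span F (φ '' ((X i : Set α))) with hS
  have hfd : ∀ i, FiniteDimensional F (S i) := fun i =>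
    FiniteDimensional.span_of_finite F ((X i).finite_toSet.image φ)
  have hspan : ∀ A B : Finset α,
      Submodule.span F (φ '' ((A ∪ B : Finset α) : Set α))
        = Submodule.span F (φ '' (A : Set α)) ⊔ Submodule.span F (φ '' (B : Set α)) := by
    intro A B
    rw [Finset.coe_union, Set.image_union, Submodule.span_union]
  -- subset facts
  have hE1 : X 1 ⊆ M.E := hX 1 (by omega) (by omega)
  have hE2 : X 2 ⊆ M.E := hX 2 (by omega) (by omega)
  have hE3 : X 3 ⊆ M.E := hX 3 (by omega) (by omega)
  have hEn : X n ⊆ M.E := hX n (by omega) (by omega)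
  -- rank of a pairwise union
  have hr2 : ∀ A B : Finset α, A ⊆ M.E → B ⊆ M.E →
      M.r (A ∪ B) = Module.finrank F
        ↥(Submodule.span F (φ '' (A : Set α)) ⊔ Submodule.span F (φ '' (B : Set α))) := by
    intro A B hA hB
    rw [hφ (A ∪ B) (Finset.union_subset hA hB), hspan]
  have hr3 : ∀ A B C : Finset α, A ⊆ M.E → B ⊆ M.E → C ⊆ M.E →
      M.r (A ∪ B ∪ C) = Module.finrank F
        ↥(Submodule.span F (φ '' (A : Set α)) ⊔ Submodule.span F (φ '' (B : Set α))
          ⊔ Submodule.span F (φ '' (C : Set α))) := by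
    intro A B C hA hB hC
    rw [hφ (A ∪ B ∪ C) (Finset.union_subset (Finset.union_subset hA hB) hC), hspan, hspan]
  have g12 : M.r (X 1 ∪ X 2) = Module.finrank F ↥(S 1 ⊔ S 2) := hr2 _ _ hE1 hE2
  have g13n : M.r (X 1 ∪ X 3 ∪ X n) = Module.finrank F ↥(S 1 ⊔ S 3 ⊔ S n) :=
    hr3 _ _ _ hE1 hE3 hEn
  have g3 : M.r (X 3) = Module.finrank F (S 3) := hφ _ hE3
  have g13 : M.r (X 1 ∪ X 3) = Module.finrank F ↥(S 1 ⊔ S 3) := hr2 _ _ hE1 hE3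
  have g1n : M.r (X 1 ∪ X n) = Module.finrank F ↥(S 1 ⊔ S n) := hr2 _ _ hE1 hEn
  have g23 : M.r (X 2 ∪ X 3) = Module.finrank F ↥(S 2 ⊔ S 3) := hr2 _ _ hE2 hE3
  have gsumL : ∑ i ∈ Finset.Icc 4 n, (M.r (X i) + M.r (X 2 ∪ X (i - 1) ∪ X i))
      = ∑ i ∈ Finset.Icc 4 n,
          (Module.finrank F (S i) + Module.finrank F ↥(S 2 ⊔ S (i - 1) ⊔ S i)) := by
    refine Finset.sum_congr rfl fun i hi => ?_
    obtain ⟨h4, hni⟩ := Finset.mem_Icc.mp hi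
    have hEi : X i ⊆ M.E := hX i (by omega) (by omega)
    have hEi1 : X (i - 1) ⊆ M.E := hX (i - 1) (by omega) (by omega)
    rw [hφ _ hEi, hr3 _ _ _ hE2 hEi1 hEi]
  have gsumR : ∑ i ∈ Finset.Icc 4 n, (M.r (X 2 ∪ X i) + M.r (X (i - 1) ∪ X i))
      = ∑ i ∈ Finset.Icc 4 n,
          (Module.finrank F ↥(S 2 ⊔ S i) + Module.finrank F ↥(S (i - 1) ⊔ S i)) := by
    refine Finset.sum_congr rfl fun i hi => ?_
    obtain ⟨h4, hni⟩ := Finset.mem_Icc.mp hi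
    have hEi : X i ⊆ M.E := hX i (by omega) (by omega)
    have hEi1 : X (i - 1) ⊆ M.E := hX (i - 1) (by omega) (by omega)
    rw [hr2 _ _ hE2 hEi, hr2 _ _ hEi1 hEi]
  rw [g12, g13n, g3, g13, g1n, g23, gsumL, gsumR]
  exact kinser_subspace S hfd n hn
end

section
/- Let M be a matroid with ground set E and rank function r that is representable over some field. Then for all subsets A, B, C, D of E, Ingleton's inequality holds: r(A ∪ B) + r(A ∪ C ∪ D) + r(C) + r(D) + r(B ∪ C ∪ D) ≤ r(A ∪ C) + r(A ∪ D) + r(B ∪ C) + r(B ∪ D) + r(C ∪ D). -/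
universe u

section IngletonLinAlg

open Module Submodule

variable {F : Type*} {V : Type*} [Field F] [AddCommGroup V] [Module F V]

theorem ingleton_subspaces (A B C D : Submodule F V)
    [FiniteDimensional F A] [FiniteDimensional F B]
    [FiniteDimensional F C] [FiniteDimensional F D] :
    finrank F (A ⊔ B : Submodule F V) + finrank F (A ⊔ C ⊔ D : Submodule F V)
      + finrank F C + finrank F D + finrank F (B ⊔ C ⊔ D : Submodule F V)
    ≤ finrank F (A ⊔ C : Submodule F V) + finrank F (A ⊔ D : Submodule F V)
      + finrank F (B ⊔ C : Submodule F V) + finrank F (B ⊔ D : Submodule F V)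
      + finrank F (C ⊔ D : Submodule F V) := by
  have h1 := Submodule.finrank_sup_add_finrank_inf_eq A B
  have h2 := Submodule.finrank_sup_add_finrank_inf_eq C D
  have h3 := Submodule.finrank_sup_add_finrank_inf_eq A C
  have h4 := Submodule.finrank_sup_add_finrank_inf_eq A D
  have h5 := Submodule.finrank_sup_add_finrank_inf_eq B C
  have h6 := Submodule.finrank_sup_add_finrank_inf_eq B D
  have h7 := Submodule.finrank_sup_add_finrank_inf_eq A (C ⊔ D)
  have h8 := Submodule.finrank_sup_add_finrank_inf_eq B (C ⊔ D)
  have h9 := Submodule.finrank_sup_add_finrank_inf_eq (A ⊓ C) (A ⊓ D)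
  have h10 := Submodule.finrank_sup_add_finrank_inf_eq (B ⊓ C) (B ⊓ D)
  have h14 := Submodule.finrank_sup_add_finrank_inf_eq (A ⊓ (C ⊓ D)) (B ⊓ (C ⊓ D))
  have e9 : (A ⊓ C) ⊓ (A ⊓ D) = A ⊓ (C ⊓ D) := (inf_inf_distrib_left A C D).symm
  have e10 : (B ⊓ C) ⊓ (B ⊓ D) = B ⊓ (C ⊓ D) := (inf_inf_distrib_left B C D).symm
  rw [e9] at h9
  rw [e10] at h10
  have h11 : finrank F ((A ⊓ C) ⊔ (A ⊓ D) : Submodule F V)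
      ≤ finrank F (A ⊓ (C ⊔ D) : Submodule F V) :=
    Submodule.finrank_mono (sup_le (inf_le_inf_left A le_sup_left)
      (inf_le_inf_left A le_sup_right))
  have h12 : finrank F ((B ⊓ C) ⊔ (B ⊓ D) : Submodule F V)
      ≤ finrank F (B ⊓ (C ⊔ D) : Submodule F V) :=
    Submodule.finrank_mono (sup_le (inf_le_inf_left B le_sup_left)
      (inf_le_inf_left B le_sup_right))
  have h15 : finrank F ((A ⊓ (C ⊓ D)) ⊔ (B ⊓ (C ⊓ D)) : Submodule F V)
      ≤ finrank F (C ⊓ D : Submodule F V) :=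
    Submodule.finrank_mono (sup_le inf_le_right inf_le_right)
  have h16 : finrank F ((A ⊓ (C ⊓ D)) ⊓ (B ⊓ (C ⊓ D)) : Submodule F V)
      ≤ finrank F (A ⊓ B : Submodule F V) :=
    Submodule.finrank_mono (le_inf (inf_le_left.trans inf_le_left)
      (inf_le_right.trans inf_le_left))
  rw [sup_assoc, sup_assoc]
  omega

end IngletonLinAlg

/-- Ingleton's inequality holds in every matroid that is representable over some field. -/
theorem ingleton_inequality {α : Type} [DecidableEq α] (M : RankMatroid α)
    (hM : M.Representable) (A B C D : Finset α)
    (hA : A ⊆ M.E) (hB : B ⊆ M.E) (hC : C ⊆ M.E) (hD : D ⊆ M.E) :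
    M.r (A ∪ B) + M.r (A ∪ C ∪ D) + M.r C + M.r D + M.r (B ∪ C ∪ D)
      ≤ M.r (A ∪ C) + M.r (A ∪ D) + M.r (B ∪ C) + M.r (B ∪ D) + M.r (C ∪ D) := by
  obtain ⟨F, _, V, _, _, φ, hφ⟩ := hM
  rw [hφ _ (Finset.union_subset hA hB),
    hφ _ (Finset.union_subset (Finset.union_subset hA hC) hD),
    hφ _ hC, hφ _ hD,
    hφ _ (Finset.union_subset (Finset.union_subset hB hC) hD),
    hφ _ (Finset.union_subset hA hC), hφ _ (Finset.union_subset hA hD),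
    hφ _ (Finset.union_subset hB hC), hφ _ (Finset.union_subset hB hD),
    hφ _ (Finset.union_subset hC hD)]
  have hs : ∀ X Y : Finset α, Submodule.span F (φ '' ((X ∪ Y : Finset α) : Set α))
      = Submodule.span F (φ '' (X : Set α)) ⊔ Submodule.span F (φ '' (Y : Set α)) := by
    intro X Y
    rw [Finset.coe_union, Set.image_union, Submodule.span_union]
  rw [hs (A ∪ C) D, hs (B ∪ C) D, hs A B, hs A C, hs B C, hs A D, hs B D, hs C D]
  have iA : FiniteDimensional F (Submodule.span F (φ '' (A : Set α))) :=
    FiniteDimensional.span_of_finite F (A.finite_toSet.image φ)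
  have iB : FiniteDimensional F (Submodule.span F (φ '' (B : Set α))) :=
    FiniteDimensional.span_of_finite F (B.finite_toSet.image φ)
  have iC : FiniteDimensional F (Submodule.span F (φ '' (C : Set α))) :=
    FiniteDimensional.span_of_finite F (C.finite_toSet.image φ)
  have iD : FiniteDimensional F (Submodule.span F (φ '' (D : Set α))) :=
    FiniteDimensional.span_of_finite F (D.finite_toSet.image φ)
  exact ingleton_subspaces _ _ _ _
end

section
/- Let K be an infinite field, let M be a matroid on a finite ground set E that is representable over K, and let e be an element not in E. Then there exists a matroid M′ on E ∪ {e} that is representable over K and satisfies: the deletion M′ \ e equals M, the rank of M′ equals the rank of M, and every circuit of M′ that contains e is a spanning set of M′. -/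
universe u

/-
Represent `M` by `φ : E → V` and let `W` be the span of `φ(E)`. Over an infinite field, `W`
is not covered by the finitely many proper subspaces `span φ(X) ∩ W` with `X ⊆ E`, so some
`v ∈ W` lies in no span `φ(X)` other than those containing `W`. Sending `e` to this generic
vector does not change the rank, and a circuit `C ∋ e` puts `v` in the span of `φ(C - e)`,
which must then contain `W`, making `C` spanning.
-/

open Submodule Module

theorem Submodule.exists_mem_forall_notMem_of_not_le {k V ι : Type*} [DivisionRing k]
    [Infinite k] [AddCommGroup V] [Module k V] (W : Submodule k V) (p : ι → Submodule k V)
    (s : Finset ι) (hs : ∀ i ∈ s, ¬ W ≤ p i) : ∃ v ∈ W, ∀ i ∈ s, v ∉ p i := by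
  classical
  have htop : ⊤ ∉ s.image fun i ↦ (p i).comap W.subtype := by
    simp only [Finset.mem_image, comap_subtype_eq_top, not_exists, not_and]
    exact hs
  obtain ⟨w, hw⟩ := Set.ne_univ_iff_exists_notMem _ |>.mp <|
    Subspace.biUnion_ne_univ_of_top_notMem htop
  simp only [Finset.mem_image, Set.mem_iUnion, exists_prop, not_exists, not_and,
    forall_exists_index, and_imp] at hw
  exact ⟨w, w.2, fun i hi hwi ↦ hw _ i hi rfl hwi⟩

theorem Function.image_update_of_notMem {α β : Type*} [DecidableEq α] (f : α → β) {a : α}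
    (b : β) {s : Set α} (ha : a ∉ s) : Function.update f a b '' s = f '' s :=
  Set.image_congr fun _ hx ↦ Function.update_of_ne (ne_of_mem_of_not_mem hx ha) _ _

section SpanRank

variable {α : Type} {K V : Type*} [DivisionRing K] [AddCommGroup V] [Module K V]

theorem finrank_span_image_finset_le_card [DecidableEq V] (φ : α → V) (X : Finset α) :
    finrank K (span K (φ '' X)) ≤ X.card := by
  rw [← Finset.coe_image]
  exact (finrank_span_finset_le_card _).trans Finset.card_image_le

theorem finrank_span_image_mono (φ : α → V) {X Y : Finset α} (h : X ⊆ Y) :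
    finrank K (span K (φ '' X)) ≤ finrank K (span K (φ '' Y)) :=
  have := FiniteDimensional.span_of_finite K (Y.finite_toSet.image φ)
  Submodule.finrank_mono (span_mono (Set.image_mono (Finset.coe_subset.mpr h)))

theorem finrank_span_image_union_add_inter_le [DecidableEq α] (φ : α → V) (X Y : Finset α) :
    finrank K (span K (φ '' ↑(X ∪ Y))) + finrank K (span K (φ '' ↑(X ∩ Y))) ≤
      finrank K (span K (φ '' X)) + finrank K (span K (φ '' Y)) := by
  have := FiniteDimensional.span_of_finite K (X.finite_toSet.image φ)
  have := FiniteDimensional.span_of_finite K (Y.finite_toSet.image φ)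
  have hinter : span K (φ '' ↑(X ∩ Y)) ≤ span K (φ '' X) ⊓ span K (φ '' Y) :=
    le_inf (span_mono (Set.image_mono (Finset.coe_subset.mpr Finset.inter_subset_left)))
      (span_mono (Set.image_mono (Finset.coe_subset.mpr Finset.inter_subset_right)))
  rw [Finset.coe_union, Set.image_union, span_union,
    ← finrank_sup_add_finrank_inf_eq (span K (φ '' X)) (span K (φ '' Y))]
  exact Nat.add_le_add_left (Submodule.finrank_mono hinter) _

theorem mem_span_image_of_finrank_span_image_insert_eq [DecidableEq α] (φ : α → V)
    {X : Finset α} {a : α}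
    (h : finrank K (span K (φ '' ↑(insert a X))) = finrank K (span K (φ '' X))) :
    φ a ∈ span K (φ '' X) := by
  have := FiniteDimensional.span_of_finite K ((insert a X).finite_toSet.image φ)
  have hle : span K (φ '' X) ≤ span K (φ '' ↑(insert a X)) :=
    span_mono (Set.image_mono (Finset.coe_subset.mpr (Finset.subset_insert a X)))
  rw [eq_of_le_of_finrank_eq hle h.symm]
  exact subset_span (Set.mem_image_of_mem φ (Finset.mem_insert_self a X))

end SpanRank

namespace RankMatroid

variable {α : Type} [DecidableEq α]

theorem Circuit.r_erase {M : RankMatroid α} {C : Finset α} (hC : M.Circuit C) {a : α}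
    (ha : a ∈ C) : M.r (C.erase a) = M.r C := by
  obtain ⟨⟨hCE, hCr⟩, hmin⟩ := hC
  have hind := (hmin _ (Finset.erase_ssubset ha)).2
  have hcard := Finset.card_erase_add_one ha
  have hle := M.r_mono _ _ (Finset.erase_subset a C) hCE
  have := M.r_le_card C hCE
  omega

section ofFun

variable (K : Type*) {V : Type*} [DivisionRing K] [AddCommGroup V] [Module K V]

noncomputable def ofFun (φ : α → V) (E : Finset α) : RankMatroid α where
  E := E
  r X := finrank K (span K (φ '' X))
  r_le_card X _ := by classical exact finrank_span_image_finset_le_card φ X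
  r_mono _ _ h _ := finrank_span_image_mono φ h
  r_submod X Y _ _ := finrank_span_image_union_add_inter_le φ X Y

variable {K}

theorem ofFun_r (φ : α → V) (E X : Finset α) :
    (ofFun K φ E).r X = finrank K (span K (φ '' X)) :=
  rfl

theorem Circuit.spanning_ofFun_of_generic {φ : α → V} {E C : Finset α} {a : α}
    (hC : (ofFun K φ E).Circuit C) (ha : a ∈ C)
    (hgen : ∀ X ⊆ E.erase a, φ a ∈ span K (φ '' X) → span K (φ '' E) ≤ span K (φ '' X)) :
    (ofFun K φ E).Spanning C := by
  have hCE : C ⊆ E := hC.1.1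
  have hmem : φ a ∈ span K (φ '' ↑(C.erase a)) := by
    refine mem_span_image_of_finrank_span_image_insert_eq φ ?_
    rw [Finset.insert_erase ha]
    exact (hC.r_erase ha).symm
  have hle := hgen _ (Finset.erase_subset_erase a hCE) hmem
  have := FiniteDimensional.span_of_finite K ((C.erase a).finite_toSet.image φ)
  refine ⟨hCE, le_antisymm (finrank_span_image_mono φ hCE) ?_⟩
  calc finrank K (span K (φ '' E))
      ≤ finrank K (span K (φ '' ↑(C.erase a))) := Submodule.finrank_mono hle
    _ ≤ finrank K (span K (φ '' C)) := finrank_span_image_mono φ (Finset.erase_subset a C)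

end ofFun

theorem ofFun_repOver {K V : Type u} [Field K] [AddCommGroup V] [Module K V] (φ : α → V)
    (E : Finset α) : (ofFun K φ E).RepOver K :=
  ⟨V, _, _, φ, fun _ _ ↦ rfl⟩

end RankMatroid

/-- Every matroid representable over an infinite field `K` has a free extension by a new
element `e` that is again representable over `K`: the extension deletes back to `M`, has
the same rank as `M`, and every circuit through `e` is spanning. -/
theorem free_extension_representable {α : Type} [DecidableEq α]
    (K : Type u) [Field K] (hK : Infinite K)
    (M : RankMatroid α) (hM : M.RepOver K) (e : α) (he : e ∉ M.E) :
    ∃ M' : RankMatroid α,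
      M'.E = insert e M.E ∧
      M'.RepOver K ∧
      (∀ X ⊆ M.E, M'.r X = M.r X) ∧
      M'.r M'.E = M.r M.E ∧
      (∀ C, M'.Circuit C → e ∈ C → M'.Spanning C) := by
  classical
  have := hK
  obtain ⟨V, _, _, φ, hφ⟩ := hM
  set W := span K (φ '' M.E)
  obtain ⟨v, hvW, hv⟩ := W.exists_mem_forall_notMem_of_not_le (fun X : Finset α ↦ span K (φ '' X))
    (M.E.powerset.filter fun X ↦ ¬ W ≤ span K (φ '' X)) fun X hX ↦ (Finset.mem_filter.mp hX).2
  set φ' := Function.update φ e v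
  have hφ' : ∀ X ⊆ M.E, φ' '' X = φ '' X := fun X hX ↦
    Function.image_update_of_notMem φ v fun h ↦ he (hX h)
  have hφ'e : φ' e = v := Function.update_self e v φ
  have hspan : span K (φ' '' ↑(insert e M.E)) = W := by
    rw [Finset.coe_insert, Set.image_insert_eq, hφ'e, hφ' M.E subset_rfl,
      span_insert_eq_span hvW]
  refine ⟨RankMatroid.ofFun K φ' (insert e M.E), rfl, RankMatroid.ofFun_repOver φ' _,
    fun X hX ↦ ?_, ?_, fun C hC heC ↦ hC.spanning_ofFun_of_generic heC fun X hX hvX ↦ ?_⟩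
  · rw [RankMatroid.ofFun_r, hφ' X hX, hφ X hX]
  · change finrank K (span K (φ' '' ↑(insert e M.E))) = M.r M.E
    rw [hspan, hφ M.E subset_rfl]
  · rw [Finset.erase_insert he] at hX
    rw [hφ'e, hφ' X hX] at hvX
    rw [hspan, hφ' X hX]
    by_contra hW
    exact hv X (Finset.mem_filter.mpr ⟨Finset.mem_powerset.mpr hX, hW⟩) hvX
end

section
/- Let M be a matroid on a finite ground set E with rank at least 1, let e be an element not in E, and let M′ be a matroid on E ∪ {e} such that the deletion M′ \ e equals M, the rank of M′ equals the rank of M, and every circuit of M′ containing e is a spanning set of M′. Then the contraction M′ / e equals the truncation T(M) of M. -/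
universe u

namespace RankMatroid

variable {α : Type} [DecidableEq α]

lemma r_empty (M : RankMatroid α) : M.r ∅ = 0 :=
  Nat.le_zero.mp (by simpa using M.r_le_card ∅ (Finset.empty_subset _))

lemma r_insert_le (M : RankMatroid α) (a : α) (S : Finset α)
    (h : insert a S ⊆ M.E) : M.r (insert a S) ≤ M.r S + 1 := by
  have hS : S ⊆ M.E := (Finset.subset_insert a S).trans h
  have ha : ({a} : Finset α) ⊆ M.E := by
    simpa using h (Finset.mem_insert_self a S)
  have := M.r_submod S {a} hS ha
  have h1 : M.r {a} ≤ 1 := by simpa using M.r_le_card {a} ha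
  have h2 : M.r (S ∪ {a}) ≤ M.r S + 1 := by omega
  have h3 : S ∪ {a} = insert a S := by ext x; simp [or_comm]
  rwa [h3] at h2

lemma r_union_le (M : RankMatroid α) (Z : Finset α) :
    ∀ Y : Finset α, Y ∪ Z ⊆ M.E → M.r (Y ∪ Z) ≤ M.r Y + Z.card := by
  induction Z using Finset.induction_on with
  | empty => intro Y h; simp
  | @insert a Z ha ih =>
      intro Y h
      have h1 : Y ∪ insert a Z = insert a (Y ∪ Z) := Finset.union_insert a Y Z
      have h2 : insert a (Y ∪ Z) ⊆ M.E := h1 ▸ h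
      have h3 : Y ∪ Z ⊆ M.E := (Finset.subset_insert a _).trans h2
      have := M.r_insert_le a (Y ∪ Z) h2
      have := ih Y h3
      rw [h1, Finset.card_insert_of_notMem ha]
      omega

lemma indep_subset (M : RankMatroid α) {X Y : Finset α}
    (hX : M.Indep X) (hYX : Y ⊆ X) : M.Indep Y := by
  obtain ⟨hXE, hXr⟩ := hX
  have hYE : Y ⊆ M.E := hYX.trans hXE
  refine ⟨hYE, le_antisymm (M.r_le_card Y hYE) ?_⟩
  have hu : Y ∪ (X \ Y) = X := Finset.union_sdiff_of_subset hYX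
  have h1 : M.r (Y ∪ (X \ Y)) ≤ M.r Y + (X \ Y).card :=
    M.r_union_le (X \ Y) Y (by rw [hu]; exact hXE)
  have h2 : (X \ Y).card = X.card - Y.card := Finset.card_sdiff_of_subset hYX
  have h3 : Y.card ≤ X.card := Finset.card_le_card hYX
  rw [hu, hXr] at h1
  omega

lemma dep_has_circuit (M : RankMatroid α) :
    ∀ X : Finset α, M.Dep X → ∃ C, C ⊆ X ∧ M.Circuit C := by
  intro X
  induction X using Finset.strongInduction with
  | _ X ih =>
      intro hX
      by_cases h : ∀ Y ⊂ X, M.Indep Y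
      · exact ⟨X, Finset.Subset.refl X, hX, h⟩
      · push_neg at h
        obtain ⟨Y, hYX, hY⟩ := h
        have hYE : Y ⊆ M.E := hYX.subset.trans hX.1
        have hYdep : M.Dep Y := ⟨hYE, fun hr => hY ⟨hYE, hr⟩⟩
        obtain ⟨C, hCY, hC⟩ := ih Y hYX hYdep
        exact ⟨C, hCY.trans hYX.subset, hC⟩

end RankMatroid

/-- If `M'` is a free extension of `M` by `e` (the deletion `M' \ e` is `M`, the ranks of
`M'` and `M` agree, and every circuit of `M'` through `e` is spanning), then the
contraction `M' / e` equals the truncation `T(M)`: both are matroids on the ground set of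
`M`, and a subset of the ground set is independent in `M' / e` if and only if it is
independent in `M` and has cardinality at most `r(E) - 1`. -/
theorem free_extension_contraction_eq_truncation {α : Type} [DecidableEq α]
    (M : RankMatroid α) (hr : 1 ≤ M.r M.E) (e : α) (he : e ∉ M.E)
    (M' : RankMatroid α) (hE : M'.E = insert e M.E)
    (hdel : ∀ X ⊆ M.E, M'.r X = M.r X)
    (hrk : M'.r M'.E = M.r M.E)
    (hcirc : ∀ C, M'.Circuit C → e ∈ C → M'.Spanning C) :
    ∀ X ⊆ M.E,
      (M'.r (insert e X) = X.card + M'.r {e}) ↔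
        (M.Indep X ∧ X.card ≤ M.r M.E - 1) := by
  have heE' : e ∈ M'.E := by rw [hE]; exact Finset.mem_insert_self e M.E
  have heS : ({e} : Finset α) ⊆ M'.E := Finset.singleton_subset_iff.mpr heE'
  -- r'({e}) = 1
  have hre : M'.r {e} = 1 := by
    have hle : M'.r {e} ≤ 1 := by simpa using M'.r_le_card {e} heS
    rcases Nat.lt_or_ge (M'.r {e}) 1 with h0 | h1
    · exfalso
      have h0' : M'.r {e} = 0 := by omega
      have hdep : M'.Dep {e} := by
        refine ⟨heS, ?_⟩; simp [h0']
      have hcir : M'.Circuit {e} := by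
        refine ⟨hdep, fun Y hY => ?_⟩
        have hYe : Y = ∅ := by
          rcases Finset.eq_empty_or_nonempty Y with h | h
          · exact h
          · exfalso
            have := Finset.eq_of_subset_of_card_le hY.subset ?_
            · exact hY.ne this
            · have := Finset.card_pos.mpr h
              simpa using this
        have : M'.Indep (∅ : Finset α) := ⟨Finset.empty_subset _, by simp [M'.r_empty]⟩
        rwa [hYe]
      have hsp := hcirc {e} hcir (Finset.mem_singleton_self e)
      have : M'.r M'.E = 0 := by rw [← hsp.2, h0']
      omega
    · omega
  intro X hX
  have heX : e ∉ X := fun h => he (hX h)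
  have hXE' : X ⊆ M'.E := by
    rw [hE]; exact hX.trans (Finset.subset_insert e M.E)
  have hXeE' : insert e X ⊆ M'.E := Finset.insert_subset heE' hXE'
  have hrX : M'.r X = M.r X := hdel X hX
  rw [hre]
  constructor
  · -- forward direction
    intro h
    have hcard : (insert e X).card = X.card + 1 := Finset.card_insert_of_notMem heX
    have hindep : M'.Indep (insert e X) := ⟨hXeE', by omega⟩
    have hXind' : M'.Indep X := M'.indep_subset hindep (Finset.subset_insert e X)
    have hXind : M.Indep X := ⟨hX, by rw [← hrX]; exact hXind'.2⟩
    have hle : M'.r (insert e X) ≤ M'.r M'.E :=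
      M'.r_mono _ _ hXeE' (Finset.Subset.refl _)
    rw [h, hrk] at hle
    exact ⟨hXind, by omega⟩
  · -- backward direction
    rintro ⟨hXind, hcard⟩
    have hub : M'.r (insert e X) ≤ M'.r X + 1 := M'.r_insert_le e X hXeE'
    have hlb : M'.r X ≤ M'.r (insert e X) :=
      M'.r_mono _ _ (Finset.subset_insert e X) hXeE'
    have hXr : M'.r X = X.card := by rw [hrX]; exact hXind.2
    rcases Nat.lt_or_ge (M'.r (insert e X)) (X.card + 1) with hlt | hge
    · exfalso
      have hcardI : (insert e X).card = X.card + 1 := Finset.card_insert_of_notMem heX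
      have hdep : M'.Dep (insert e X) := ⟨hXeE', by omega⟩
      obtain ⟨C, hCX, hC⟩ := M'.dep_has_circuit _ hdep
      have heC : e ∈ C := by
        by_contra heC
        have hCX' : C ⊆ X := fun x hx => by
          rcases Finset.mem_insert.mp (hCX hx) with h | h
          · exact absurd (h ▸ hx) heC
          · exact h
        have : M'.Indep C := M'.indep_subset ⟨hXE', hXr⟩ hCX'
        exact hC.1.2 this.2
      have hsp := hcirc C hC heC
      have h1 : M'.r C ≤ M'.r (insert e X) := M'.r_mono _ _ hCX hXeE'
      rw [hsp.2, hrk] at h1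
      omega
    · omega
end

section
/- Let E be a finite set, let S_1, …, S_m be subsets of E, let t_1, …, t_n be elements of E, and let T = {t_1, …, t_n}. Then every subset of E that is definable from the family S_1, …, S_m, {t_1}, …, {t_n} can be written in the form (A ∖ T) ∪ B, where A is a subset of E definable from the family S_1, …, S_m, and B is a subset of T. -/
/-- A minterm of a finite family `A : ι → Finset α` of subsets of `E`: the intersection
`⋂ i, f (A i)`, where each `f (A i)` is either `A i` or `E \ A i`, as prescribed by a
choice function `f : ι → Bool`. -/
def Minterm {α : Type} [DecidableEq α] {ι : Type} [Fintype ι]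
    (E : Finset α) (A : ι → Finset α) (f : ι → Bool) : Finset α :=
  E.filter fun x => ∀ i, (x ∈ A i ↔ f i = true)

/-- A subset of `E` is definable from the family `A` if it is a union of (possibly zero)
minterms of the family. -/
def Definable {α : Type} [DecidableEq α] {ι : Type} [Fintype ι]
    (E : Finset α) (A : ι → Finset α) (X : Finset α) : Prop :=
  ∃ G : Finset (ι → Bool), X = G.sup fun f => Minterm E A f

/-- Every set definable from the family `S_1, …, S_m, {t_1}, …, {t_n}` has the form
`(A \ T) ∪ B` where `A` is definable from `S_1, …, S_m` alone, `T = {t_1, …, t_n}`,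
and `B ⊆ T`. -/
theorem definable_decomposition {α : Type} [DecidableEq α] (E : Finset α) (m n : ℕ)
    (S : Fin m → Finset α) (hS : ∀ i, S i ⊆ E)
    (t : Fin n → α) (ht : ∀ j, t j ∈ E)
    (X : Finset α)
    (hX : Definable E (Sum.elim S fun j : Fin n => ({t j} : Finset α)) X) :
    ∃ A B : Finset α,
      Definable E S A ∧
      B ⊆ Finset.image t Finset.univ ∧
      X = (A \ Finset.image t Finset.univ) ∪ B := by
  classical
  obtain ⟨G, hG⟩ := hX
  set T := Finset.image t Finset.univ with hT
  set G' : Finset (Fin m → Bool) :=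
    (G.filter fun f => ∀ j, f (Sum.inr j) = false).image (fun f => f ∘ Sum.inl) with hG'
  refine ⟨G'.sup fun f => Minterm E S f, X ∩ T, ⟨G', rfl⟩, Finset.inter_subset_right, ?_⟩
  ext x
  simp only [Finset.mem_union, Finset.mem_sdiff, Finset.mem_inter]
  by_cases hxT : x ∈ T
  · simp [hxT]
  · simp only [hxT, and_false, or_false, and_true, not_false_iff]
    have key : x ∈ X ↔ x ∈ G'.sup fun f => Minterm E S f := by
      have hxt : ∀ j, x ≠ t j := by
        intro j h
        exact hxT (by simp [hT, h])
      rw [hG]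
      simp only [Finset.mem_sup, Minterm, Finset.mem_filter]
      constructor
      · rintro ⟨f, hfG, hxE, hf⟩
        have hfr : ∀ j, f (Sum.inr j) = false := by
          intro j
          have := hf (Sum.inr j)
          simp only [Sum.elim_inr, Finset.mem_singleton] at this
          cases h : f (Sum.inr j)
          · rfl
          · exact absurd (this.mpr h) (hxt j)
        refine ⟨f ∘ Sum.inl, ?_, hxE, fun i => ?_⟩
        · rw [hG']
          exact Finset.mem_image_of_mem _ (Finset.mem_filter.mpr ⟨hfG, hfr⟩)
        · simpa using hf (Sum.inl i)
      · rintro ⟨g, hg, hxE, hgx⟩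
        rw [hG'] at hg
        obtain ⟨f, hf, rfl⟩ := Finset.mem_image.mp hg
        obtain ⟨hfG, hfr⟩ := Finset.mem_filter.mp hf
        refine ⟨f, hfG, hxE, fun i => ?_⟩
        cases i with
        | inl i => simpa using hgx i
        | inr j =>
          simp only [Sum.elim_inr, Finset.mem_singleton, hfr j]
          constructor
          · exact fun h => absurd h (hxt j)
          · intro h; exact absurd h (by simp)
    exact key
end
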